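/- For every j with 0 ≤ j < n, the invariants of the j-th derived subgroup of the unipotent Jonquières group inside the subalgebra generated by the first j+1 variables equal the subalgebra generated by the first j variables: {f ∈ A_{j+1} : φ(f) = f for all φ ∈ Jonq_u(n)^(j)} = A_j. -/

import Mathlib

open MvPolynomial

noncomputable section

variable (k : Type*) [Field k] (n : ℕ)

/-- `Asub k n j` is the subalgebra of `k[x_1,…,x_n]` generated by the first `j` variables
`x_1, …, x_j`  (so `Asub k n 0 = k` and `Asub k n n` is everything). -/
def Asub (j : ℕ) : Subalgebra k (MvPolynomial (Fin n) k) :=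
  Algebra.adjoin k {P | ∃ i : Fin n, (i : ℕ) < j ∧ P = X i}

/-- The Jonquières subgroup of the automorphism group of affine `n`-space:
all `k`-algebra automorphisms `φ` of `k[x_1,…,x_n]` with `φ (Asub k n j) = Asub k n j`
for every `j = 1, …, n` (the condition for `j = 0` holds trivially). -/
def Jonq : Subgroup (MvPolynomial (Fin n) k ≃ₐ[k] MvPolynomial (Fin n) k) where
  carrier := {φ | ∀ j ≤ n,
    (Asub k n j).map (φ : MvPolynomial (Fin n) k →ₐ[k] MvPolynomial (Fin n) k) = Asub k n j}
  one_mem' := by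
    intro j _
    have h : ((1 : MvPolynomial (Fin n) k ≃ₐ[k] MvPolynomial (Fin n) k) :
        MvPolynomial (Fin n) k →ₐ[k] MvPolynomial (Fin n) k) = AlgHom.id k _ := by
      ext x; rfl
    rw [h, Subalgebra.map_id]
  mul_mem' := by
    intro φ ψ hφ hψ j hj
    have h : ((φ * ψ : MvPolynomial (Fin n) k ≃ₐ[k] MvPolynomial (Fin n) k) :
        MvPolynomial (Fin n) k →ₐ[k] MvPolynomial (Fin n) k)
        = (φ : MvPolynomial (Fin n) k →ₐ[k] MvPolynomial (Fin n) k).comp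
          (ψ : MvPolynomial (Fin n) k →ₐ[k] MvPolynomial (Fin n) k) := by
      ext x; rfl
    rw [h, ← Subalgebra.map_map, hψ j hj, hφ j hj]
  inv_mem' := by
    intro φ hφ j hj
    conv_lhs => rw [← hφ j hj]
    rw [Subalgebra.map_map]
    have h : ((φ⁻¹ : MvPolynomial (Fin n) k ≃ₐ[k] MvPolynomial (Fin n) k) :
          MvPolynomial (Fin n) k →ₐ[k] MvPolynomial (Fin n) k).comp
          (φ : MvPolynomial (Fin n) k →ₐ[k] MvPolynomial (Fin n) k) = AlgHom.id k _ := by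
      exact AlgHom.ext fun x => φ.symm_apply_apply x
    rw [h, Subalgebra.map_id]

lemma mem_Jonq_iff (φ : MvPolynomial (Fin n) k ≃ₐ[k] MvPolynomial (Fin n) k) :
    φ ∈ Jonq k n ↔ ∀ j ≤ n,
      (Asub k n j).map (φ : MvPolynomial (Fin n) k →ₐ[k] MvPolynomial (Fin n) k)
        = Asub k n j :=
  Iff.rfl

/-- The unipotent Jonquières subgroup: those `φ` in the Jonquières subgroup with
`φ (x_i) - x_i ∈ Asub k n (i-1)` for every `i = 1, …, n` (zero-indexed below). -/
def JonqU : Subgroup (MvPolynomial (Fin n) k ≃ₐ[k] MvPolynomial (Fin n) k) where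
  carrier := {φ | φ ∈ Jonq k n ∧ ∀ i : Fin n, φ (X i) - X i ∈ Asub k n (i : ℕ)}
  one_mem' := ⟨(Jonq k n).one_mem, fun i => by
    simpa using (Asub k n (i : ℕ)).zero_mem⟩
  mul_mem' := by
    rintro φ ψ ⟨hφJ, hφU⟩ ⟨hψJ, hψU⟩
    refine ⟨(Jonq k n).mul_mem hφJ hψJ, fun i => ?_⟩
    have h1 : φ (ψ (X i) - X i) ∈ Asub k n (i : ℕ) := by
      have h := (mem_Jonq_iff k n φ).mp hφJ (i : ℕ) (le_of_lt i.isLt)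
      rw [← h]
      exact Subalgebra.mem_map.mpr ⟨_, hψU i, rfl⟩
    have h2 : (φ * ψ) (X i) - X i = φ (ψ (X i) - X i) + (φ (X i) - X i) := by
      rw [AlgEquiv.mul_apply, map_sub]; ring
    rw [h2]
    exact add_mem h1 (hφU i)
  inv_mem' := by
    rintro φ ⟨hφJ, hφU⟩
    refine ⟨(Jonq k n).inv_mem hφJ, fun i => ?_⟩
    have h1 : φ⁻¹ (φ (X i) - X i) ∈ Asub k n (i : ℕ) := by
      have h := (mem_Jonq_iff k n φ⁻¹).mp ((Jonq k n).inv_mem hφJ) (i : ℕ) (le_of_lt i.isLt)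
      rw [← h]
      exact Subalgebra.mem_map.mpr ⟨_, hφU i, rfl⟩
    have h2 : φ⁻¹ (X i) - X i = -(φ⁻¹ (φ (X i) - X i)) := by
      rw [map_sub]
      have h : φ⁻¹ (φ (X i)) = X i := φ.symm_apply_apply (X i)
      rw [h]; ring
    rw [h2]
    exact neg_mem h1

/-- The iterated derived subgroup `H⁽ᵐ⁾` of a subgroup `H`, taken inside the ambient
group: `H⁽⁰⁾ = H` and `H⁽ᵐ⁺¹⁾ = [H⁽ᵐ⁾, H⁽ᵐ⁾]`. -/
def derivedSub {G : Type*} [Group G] (H : Subgroup G) : ℕ → Subgroup G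
  | 0 => H
  | m + 1 => ⁅derivedSub H m, derivedSub H m⁆

open scoped commutatorElement

section Helpers

variable {k n}

lemma Asub_mono {i j : ℕ} (h : i ≤ j) : Asub k n i ≤ Asub k n j := by
  apply Algebra.adjoin_mono
  rintro P ⟨l, hl, rfl⟩
  exact ⟨l, lt_of_lt_of_le hl h, rfl⟩

/-- An algebra hom fixing the first `m` variables fixes `Asub k n m` pointwise. -/
lemma algHom_fix {m : ℕ} (ψ : MvPolynomial (Fin n) k →ₐ[k] MvPolynomial (Fin n) k)
    (hψ : ∀ l : Fin n, (l : ℕ) < m → ψ (X l) = X l)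
    {a : MvPolynomial (Fin n) k} (ha : a ∈ Asub k n m) : ψ a = a := by
  induction ha using Algebra.adjoin_induction with
  | mem x hx => obtain ⟨l, hl, rfl⟩ := hx; exact hψ l hl
  | algebraMap r => exact ψ.commutes r
  | add x y hx hy ihx ihy => rw [map_add, ihx, ihy]
  | mul x y hx hy ihx ihy => rw [map_mul, ihx, ihy]

lemma algEquiv_ext {φ ψ : MvPolynomial (Fin n) k ≃ₐ[k] MvPolynomial (Fin n) k}
    (h : ∀ l : Fin n, φ (X l) = ψ (X l)) : φ = ψ :=
  AlgEquiv.ext fun p =>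
    AlgHom.congr_fun (MvPolynomial.algHom_ext (f := φ.toAlgHom) (g := ψ.toAlgHom) h) p

/-- The elementary shift `x_i ↦ x_i + a` as an algebra hom. -/
def shiftHom (i : Fin n) (a : MvPolynomial (Fin n) k) :
    MvPolynomial (Fin n) k →ₐ[k] MvPolynomial (Fin n) k :=
  aeval (fun l => if l = i then X i + a else X l)

lemma shiftHom_X (i : Fin n) (a : MvPolynomial (Fin n) k) (l : Fin n) :
    shiftHom i a (X l) = if l = i then X i + a else X l := aeval_X _ _

lemma shiftHom_X_self (i : Fin n) (a : MvPolynomial (Fin n) k) :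
    shiftHom i a (X i) = X i + a := by rw [shiftHom_X, if_pos rfl]

lemma shiftHom_X_ne (i : Fin n) (a : MvPolynomial (Fin n) k) {l : Fin n} (h : l ≠ i) :
    shiftHom i a (X l) = X l := by rw [shiftHom_X, if_neg h]

lemma shiftHom_fix (i : Fin n) (a : MvPolynomial (Fin n) k) {m : ℕ} (hm : m ≤ (i : ℕ))
    {b : MvPolynomial (Fin n) k} (hb : b ∈ Asub k n m) : shiftHom i a b = b := by
  refine algHom_fix _ (fun l hl => ?_) hb
  exact shiftHom_X_ne i a (fun h => absurd (h ▸ hl : (i:ℕ) < m) (not_lt.mpr hm))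

lemma shiftHom_comp (i : Fin n) (a b : MvPolynomial (Fin n) k) (hb : b ∈ Asub k n (i : ℕ)) :
    (shiftHom i a).comp (shiftHom i b) = shiftHom i (a + b) := by
  apply MvPolynomial.algHom_ext
  intro l
  simp only [AlgHom.comp_apply, shiftHom_X]
  by_cases h : l = i
  · rw [if_pos h, if_pos h, map_add, shiftHom_X_self, shiftHom_fix i a le_rfl hb]
    ring
  · rw [if_neg h, shiftHom_X_ne i a h, if_neg h]

lemma shiftHom_mem (i : Fin n) {a : MvPolynomial (Fin n) k} (ha : a ∈ Asub k n (i : ℕ))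
    {m : ℕ} (hm : (i : ℕ) < m) {b : MvPolynomial (Fin n) k} (hb : b ∈ Asub k n m) :
    shiftHom i a b ∈ Asub k n m := by
  induction hb using Algebra.adjoin_induction with
  | mem x hx =>
    obtain ⟨l, hl, rfl⟩ := hx
    rw [shiftHom_X]
    by_cases h : l = i
    · rw [if_pos h]
      exact add_mem (Algebra.subset_adjoin ⟨i, hm, rfl⟩) (Asub_mono (le_of_lt hm) ha)
    · rw [if_neg h]
      exact Algebra.subset_adjoin ⟨l, hl, rfl⟩
  | algebraMap r => rw [AlgHom.commutes]; exact Subalgebra.algebraMap_mem _ r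
  | add x y hx hy ihx ihy => rw [map_add]; exact add_mem ihx ihy
  | mul x y hx hy ihx ihy => rw [map_mul]; exact mul_mem ihx ihy

/-- The elementary automorphism `x_i ↦ x_i + a` where `a` involves only earlier variables. -/
def Eaut (i : Fin n) (a : MvPolynomial (Fin n) k) (ha : a ∈ Asub k n (i : ℕ)) :
    MvPolynomial (Fin n) k ≃ₐ[k] MvPolynomial (Fin n) k :=
  AlgEquiv.ofAlgHom (shiftHom i a) (shiftHom i (-a))
    (by rw [shiftHom_comp i a (-a) (neg_mem ha), add_neg_cancel]
        apply MvPolynomial.algHom_ext; intro l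
        rw [AlgHom.id_apply, shiftHom_X]; split <;> simp_all)
    (by rw [shiftHom_comp i (-a) a ha, neg_add_cancel]
        apply MvPolynomial.algHom_ext; intro l
        rw [AlgHom.id_apply, shiftHom_X]; split <;> simp_all)

lemma Eaut_apply (i : Fin n) (a : MvPolynomial (Fin n) k) (ha : a ∈ Asub k n (i : ℕ))
    (p : MvPolynomial (Fin n) k) : Eaut i a ha p = shiftHom i a p := rfl

lemma Eaut_toAlgHom (i : Fin n) (a : MvPolynomial (Fin n) k) (ha : a ∈ Asub k n (i : ℕ)) :
    (Eaut i a ha : MvPolynomial (Fin n) k →ₐ[k] MvPolynomial (Fin n) k) = shiftHom i a := rfl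

lemma Eaut_congr (i : Fin n) {a b : MvPolynomial (Fin n) k} (ha : a ∈ Asub k n (i : ℕ))
    (hb : b ∈ Asub k n (i : ℕ)) (h : a = b) : Eaut i a ha = Eaut i b hb := by subst h; rfl

lemma Eaut_mul (i : Fin n) (a b : MvPolynomial (Fin n) k) (ha : a ∈ Asub k n (i : ℕ))
    (hb : b ∈ Asub k n (i : ℕ)) :
    Eaut i a ha * Eaut i b hb = Eaut i (a + b) (add_mem ha hb) := by
  apply algEquiv_ext; intro l
  rw [AlgEquiv.mul_apply, Eaut_apply, Eaut_apply, Eaut_apply,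
    ← AlgHom.comp_apply, shiftHom_comp i a b hb]

lemma Eaut_inv (i : Fin n) (a : MvPolynomial (Fin n) k) (ha : a ∈ Asub k n (i : ℕ)) :
    (Eaut i a ha)⁻¹ = Eaut i (-a) (neg_mem ha) := by
  apply inv_eq_of_mul_eq_one_right
  rw [Eaut_mul]
  apply algEquiv_ext; intro l
  rw [Eaut_apply, add_neg_cancel, AlgEquiv.one_apply, shiftHom_X]
  split <;> simp_all

end Helpers

section Part2

variable {k n}

lemma Eaut_mem_JonqU (i : Fin n) (a : MvPolynomial (Fin n) k) (ha : a ∈ Asub k n (i : ℕ)) :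
    Eaut i a ha ∈ JonqU k n := by
  have key : ∀ (b : MvPolynomial (Fin n) k) (hb : b ∈ Asub k n (i : ℕ)) (j : ℕ),
      (Asub k n j).map (Eaut i b hb : MvPolynomial (Fin n) k →ₐ[k] MvPolynomial (Fin n) k)
        ≤ Asub k n j := by
    intro b hb j
    rintro _ ⟨p, hp, rfl⟩
    rw [Eaut_toAlgHom]
    show shiftHom i b p ∈ Asub k n j
    induction hp using Algebra.adjoin_induction with
    | mem x hx =>
      obtain ⟨l, hl, rfl⟩ := hx
      rw [shiftHom_X]
      by_cases h : l = i
      · rw [if_pos h]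
        refine add_mem (Algebra.subset_adjoin ⟨i, ?_, rfl⟩) (Asub_mono ?_ hb)
        · exact h ▸ hl
        · exact le_of_lt (h ▸ hl)
      · rw [if_neg h]
        exact Algebra.subset_adjoin ⟨l, hl, rfl⟩
    | algebraMap r => rw [AlgHom.commutes]; exact Subalgebra.algebraMap_mem _ r
    | add x y hx hy ihx ihy => rw [map_add]; exact add_mem ihx ihy
    | mul x y hx hy ihx ihy => rw [map_mul]; exact mul_mem ihx ihy
  constructor
  · intro j _
    refine le_antisymm (key a ha j) ?_
    intro p hp
    refine ⟨(Eaut i a ha)⁻¹ p, ?_, ?_⟩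
    · rw [Eaut_inv]
      exact key (-a) (neg_mem ha) j ⟨p, hp, rfl⟩
    · exact (Eaut i a ha).apply_symm_apply p
  · intro l
    rw [Eaut_apply, shiftHom_X]
    by_cases h : l = i
    · rw [if_pos h, h]
      have h2 : X i + a - X i = a := by ring
      rw [h2]
      exact ha
    · rw [if_neg h]
      simpa using (Asub k n (l : ℕ)).zero_mem

lemma derivedSub_le {G : Type*} [Group G] (H : Subgroup G) (m : ℕ) :
    derivedSub H m ≤ H := by
  induction m with
  | zero => exact le_rfl
  | succ m ih =>
    refine le_trans ?_ ih
    refine Subgroup.commutator_le.mpr fun g₁ h₁ g₂ h₂ => ?_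
    rw [commutatorElement_def]
    exact mul_mem (mul_mem (mul_mem h₁ h₂) (inv_mem h₁)) (inv_mem h₂)

/-- The subgroup of automorphisms fixing `Asub k n m` pointwise. -/
def fixer (m : ℕ) : Subgroup (MvPolynomial (Fin n) k ≃ₐ[k] MvPolynomial (Fin n) k) where
  carrier := {φ | ∀ f ∈ Asub k n m, φ f = f}
  one_mem' := fun f _ => rfl
  mul_mem' := by
    intro φ ψ hφ hψ f hf
    rw [AlgEquiv.mul_apply, hψ f hf, hφ f hf]
  inv_mem' := by
    intro φ hφ f hf
    show φ.symm f = f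
    conv_lhs => rw [← hφ f hf]
    exact φ.symm_apply_apply f

lemma fixes_derived (m : ℕ) :
    derivedSub (JonqU k n) m ≤ fixer (k := k) (n := n) m := by
  induction m with
  | zero =>
    intro φ _ f hf
    exact algHom_fix (φ : MvPolynomial (Fin n) k →ₐ[k] MvPolynomial (Fin n) k)
      (fun l hl => absurd hl (Nat.not_lt_zero _)) hf
  | succ m ih =>
    show (⁅derivedSub (JonqU k n) m, derivedSub (JonqU k n) m⁆ : Subgroup _) ≤ _
    rw [Subgroup.commutator_le]
    intro φ hφ ψ hψ
    intro f hf
    refine algHom_fix ((⁅φ, ψ⁆ : MvPolynomial (Fin n) k ≃ₐ[k] MvPolynomial (Fin n) k) :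
      MvPolynomial (Fin n) k →ₐ[k] MvPolynomial (Fin n) k) (fun l hl => ?_) hf
    -- φ, ψ and their inverses fix Asub m pointwise
    have hφf := ih hφ
    have hψf := ih hψ
    have hφi := ih ((derivedSub (JonqU k n) m).inv_mem hφ)
    have hψi := ih ((derivedSub (JonqU k n) m).inv_mem hψ)
    have hφJ : φ ∈ JonqU k n := derivedSub_le _ m hφ
    have hψJ : ψ ∈ JonqU k n := derivedSub_le _ m hψ
    -- the "extra" parts
    have hlm : (l : ℕ) ≤ m := Nat.lt_succ_iff.mp hl
    set f₁ := φ (X l) - X l with hf₁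
    set g₁ := ψ (X l) - X l with hg₁
    have hf₁m : f₁ ∈ Asub k n m := Asub_mono hlm (hφJ.2 l)
    have hg₁m : g₁ ∈ Asub k n m := Asub_mono hlm (hψJ.2 l)
    have hφX : φ (X l) = X l + f₁ := by rw [hf₁]; ring
    have hψX : ψ (X l) = X l + g₁ := by rw [hg₁]; ring
    have hφinvX : φ.symm (X l) = X l - f₁ := by
      have : φ (X l - f₁) = X l := by
        rw [map_sub, hφX, hφf f₁ hf₁m]; ring
      conv_lhs => rw [← this]
      exact φ.symm_apply_apply _
    have hψinvX : ψ.symm (X l) = X l - g₁ := by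
      have : ψ (X l - g₁) = X l := by
        rw [map_sub, hψX, hψf g₁ hg₁m]; ring
      conv_lhs => rw [← this]
      exact ψ.symm_apply_apply _
    show (φ * ψ * φ⁻¹ * ψ⁻¹) (X l) = X l
    rw [AlgEquiv.mul_apply, AlgEquiv.mul_apply, AlgEquiv.mul_apply]
    show φ (ψ (φ.symm (ψ.symm (X l)))) = X l
    rw [hψinvX, map_sub, hφinvX]
    have h1 : φ.symm g₁ = g₁ := hφi g₁ hg₁m
    have h2 : ψ f₁ = f₁ := hψf f₁ hf₁m
    have h3 : ψ g₁ = g₁ := hψf g₁ hg₁m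
    have h4 : φ f₁ = f₁ := hφf f₁ hf₁m
    have h5 : φ g₁ = g₁ := hφf g₁ hg₁m
    simp only [h1, map_sub, map_add, hψX, hφX, h2, h3, h4, h5]
    ring

end Part2

section Part3

variable {k n}

lemma Eaut_commutator (i' i : Fin n) (hii : (i' : ℕ) < (i : ℕ))
    (b g : MvPolynomial (Fin n) k) (hb : b ∈ Asub k n (i' : ℕ)) (hg : g ∈ Asub k n (i : ℕ)) :
    ⁅Eaut i' b hb, Eaut i g hg⁆ =
      Eaut i (shiftHom i' b g - g) (sub_mem (shiftHom_mem i' hb hii hg) hg) := by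
  have hne : i ≠ i' := fun h => absurd (h ▸ hii) (lt_irrefl _)
  have hne' : i' ≠ i := fun h => hne h.symm
  have hid : (shiftHom i' b).comp (shiftHom i' (-b)) = AlgHom.id k (MvPolynomial (Fin n) k) := by
    rw [shiftHom_comp i' b (-b) (neg_mem hb), add_neg_cancel]
    apply MvPolynomial.algHom_ext; intro l
    rw [AlgHom.id_apply, shiftHom_X]; split <;> simp_all
  have hbb : ∀ c : MvPolynomial (Fin n) k, shiftHom i' b (shiftHom i' (-b) c) = c := by
    intro c
    rw [← AlgHom.comp_apply, hid, AlgHom.id_apply]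
  rw [commutatorElement_def, Eaut_inv, Eaut_inv]
  apply algEquiv_ext; intro l
  rw [AlgEquiv.mul_apply, AlgEquiv.mul_apply, AlgEquiv.mul_apply]
  simp only [Eaut_apply]
  by_cases hli : l = i
  · have e1 : shiftHom i' (-b) (X i) = X i := shiftHom_X_ne _ _ hne
    have e2 : shiftHom i' b (X i) = X i := shiftHom_X_ne _ _ hne
    have e3 : shiftHom i g (shiftHom i' (-b) g) = shiftHom i' (-b) g :=
      shiftHom_fix i g le_rfl (shiftHom_mem i' (neg_mem hb) hii hg)
    have e4 : shiftHom i' b (shiftHom i' (-b) g) = g := hbb g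
    have e5 : shiftHom i g (X i) = X i + g := shiftHom_X_self _ _
    have e6 : shiftHom i (-g) (X i) = X i + -g := shiftHom_X_self _ _
    have e7 : shiftHom i (shiftHom i' b g - g) (X i) = X i + (shiftHom i' b g - g) :=
      shiftHom_X_self _ _
    rw [hli]
    simp only [map_add, map_neg, e6, e1, e5, e3, e2, e4, e7]
    ring
  · by_cases hli' : l = i'
    · have e1 : shiftHom i (-g) (X i') = X i' := shiftHom_X_ne _ _ hne'
      have e2 : shiftHom i' (-b) (X i') = X i' + -b := shiftHom_X_self _ _
      have e3 : shiftHom i g (X i') = X i' := shiftHom_X_ne _ _ hne'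
      have e4 : shiftHom i g b = b := shiftHom_fix i g (le_of_lt hii) hb
      have e5 : shiftHom i' b (X i') = X i' + b := shiftHom_X_self _ _
      have e6 : shiftHom i' b b = b := shiftHom_fix i' b le_rfl hb
      have e7 : shiftHom i (shiftHom i' b g - g) (X i') = X i' := shiftHom_X_ne _ _ hne'
      rw [hli']
      simp only [map_add, map_neg, e1, e2, e3, e4, e5, e6, e7]
      ring
    · rw [shiftHom_X_ne _ _ hli, shiftHom_X_ne _ _ hli', shiftHom_X_ne _ _ hli,
        shiftHom_X_ne _ _ hli', shiftHom_X_ne _ _ hli]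

lemma prod_mem_Asub (i : Fin n) (c : k) (T : Finset (Fin n))
    (hT : ∀ l ∈ T, (l : ℕ) < (i : ℕ)) :
    (C c : MvPolynomial (Fin n) k) * ∏ l ∈ T, X l ∈ Asub k n (i : ℕ) := by
  refine mul_mem ?_ (prod_mem fun l hl => Algebra.subset_adjoin ⟨l, hT l hl, rfl⟩)
  rw [← MvPolynomial.algebraMap_eq]
  exact Subalgebra.algebraMap_mem _ c

lemma Emon_mem (m : ℕ) : ∀ (i : Fin n), m ≤ (i : ℕ) → ∀ (c : k) (T : Finset (Fin n))
    (hT : ∀ l ∈ T, m ≤ (l : ℕ) ∧ (l : ℕ) < (i : ℕ)),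
    Eaut i ((C c : MvPolynomial (Fin n) k) * ∏ l ∈ T, X l)
        (prod_mem_Asub i c T fun l hl => (hT l hl).2)
      ∈ derivedSub (JonqU k n) m := by
  induction m with
  | zero => intro i _ c T hT; exact Eaut_mem_JonqU _ _ _
  | succ m ih =>
    intro i hi c T hT
    have hmn : m < n := lt_of_lt_of_le (Nat.lt_of_succ_le hi) (le_of_lt i.isLt)
    set m' : Fin n := ⟨m, hmn⟩ with hm'
    have hm'i : (m' : ℕ) < (i : ℕ) := Nat.lt_of_succ_le hi
    have hm'T : m' ∉ T := fun h => by
      have := (hT m' h).1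
      simp only [hm'] at this
      omega
    -- the two ingredients, at level m
    have h1 : Eaut m' ((C 1 : MvPolynomial (Fin n) k) * ∏ l ∈ (∅ : Finset (Fin n)), X l)
        (prod_mem_Asub m' 1 ∅ fun l hl => absurd hl (Finset.notMem_empty l))
        ∈ derivedSub (JonqU k n) m :=
      ih m' le_rfl 1 ∅ fun l hl => absurd hl (Finset.notMem_empty l)
    have hbT : ∀ l ∈ insert m' T, m ≤ (l : ℕ) ∧ (l : ℕ) < (i : ℕ) := by
      intro l hl
      rcases Finset.mem_insert.mp hl with h | h
      · exact ⟨by rw [h], h ▸ hm'i⟩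
      · exact ⟨le_trans (Nat.le_succ m) (hT l h).1, (hT l h).2⟩
    have h2 := ih i (le_trans (Nat.le_succ m) hi) c (insert m' T) hbT
    have hcom := Subgroup.commutator_mem_commutator h1 h2
    rw [Eaut_commutator m' i hm'i] at hcom
    have key : shiftHom m' ((C 1 : MvPolynomial (Fin n) k) * ∏ l ∈ (∅ : Finset (Fin n)), X l)
        ((C c : MvPolynomial (Fin n) k) * ∏ l ∈ insert m' T, X l)
        - (C c : MvPolynomial (Fin n) k) * ∏ l ∈ insert m' T, X l
        = (C c : MvPolynomial (Fin n) k) * ∏ l ∈ T, X l := by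
      have hb1 : (C 1 : MvPolynomial (Fin n) k) * ∏ l ∈ (∅ : Finset (Fin n)), X l = 1 := by
        simp
      rw [hb1]
      have hC : shiftHom m' (1 : MvPolynomial (Fin n) k) (C c : MvPolynomial (Fin n) k)
          = C c := by
        rw [← MvPolynomial.algebraMap_eq]; exact (shiftHom m' 1).commutes c
      have hP : shiftHom m' (1 : MvPolynomial (Fin n) k) (∏ l ∈ T, X l) = ∏ l ∈ T, X l := by
        rw [map_prod]
        exact Finset.prod_congr rfl fun l hl => shiftHom_X_ne _ _ (fun h => hm'T (h ▸ hl))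
      rw [Finset.prod_insert hm'T, map_mul, map_mul, hC, hP, shiftHom_X_self]
      ring
    rw [Eaut_congr i _ (prod_mem_Asub i c T fun l hl => (hT l hl).2) key] at hcom
    exact hcom

end Part3

section Part4

variable {k n}

lemma eval_aeval' (x : Fin n → k) (F : Fin n → MvPolynomial (Fin n) k)
    (p : MvPolynomial (Fin n) k) :
    eval x (aeval F p) = eval (fun l => eval x (F l)) p := by
  induction p using MvPolynomial.induction_on with
  | C a => simp [aeval_C, MvPolynomial.algebraMap_eq]
  | add p q hp hq => rw [map_add, map_add, hp, hq, map_add]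
  | mul_X p i hp => rw [map_mul, map_mul, aeval_X, hp, map_mul, eval_X]

end Part4

/-- The invariants of the `j`-th derived subgroup of the unipotent Jonquières group inside
the subalgebra generated by the first `j+1` variables are exactly the polynomials in the
first `j` variables. -/
theorem invariants_derived_jonqU_in_next [IsAlgClosed k] (hn : 1 ≤ n) (j : ℕ) (hj : j < n) :
    {f : MvPolynomial (Fin n) k |
        f ∈ Asub k n (j + 1) ∧ ∀ φ ∈ derivedSub (JonqU k n) j, φ f = f}
      = (Asub k n j : Set (MvPolynomial (Fin n) k)) := by
  have hj' : (⟨j, hj⟩ : Fin n) = ⟨j, hj⟩ := rfl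
  set j' : Fin n := ⟨j, hj⟩ with hj'def
  ext f
  simp only [Set.mem_setOf_eq, SetLike.mem_coe]
  constructor
  · rintro ⟨hf1, hf2⟩
    -- Step 1: membership of the substituted polynomial
    set g : Fin n → MvPolynomial (Fin n) k := fun l => if l = j' then 0 else X l with hgdef
    have hmem : aeval g f ∈ Asub k n j := by
      clear hf2
      induction hf1 using Algebra.adjoin_induction with
      | mem x hx =>
        obtain ⟨l, hl, rfl⟩ := hx
        rw [aeval_X]
        by_cases h : l = j'
        · rw [hgdef]; simp only [if_pos h]; exact (Asub k n j).zero_mem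
        · rw [hgdef]; simp only [if_neg h]
          refine Algebra.subset_adjoin ⟨l, ?_, rfl⟩
          have : (l : ℕ) ≠ j := fun hlj => h (Fin.ext hlj)
          omega
      | algebraMap r => rw [AlgHom.commutes]; exact Subalgebra.algebraMap_mem _ r
      | add x y hx hy ihx ihy => rw [map_add]; exact add_mem ihx ihy
      | mul x y hx hy ihx ihy => rw [map_mul]; exact mul_mem ihx ihy
    -- Step 2: shift invariance for all constants
    have hshift : ∀ c : k, shiftHom j' (C c) f = f := by
      intro c
      have hmemc : (C c : MvPolynomial (Fin n) k) * ∏ l ∈ (∅ : Finset (Fin n)), X l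
          ∈ Asub k n (j' : ℕ) :=
        prod_mem_Asub j' c ∅ fun l hl => absurd hl (Finset.notMem_empty l)
      have hmemc' : (C c : MvPolynomial (Fin n) k) ∈ Asub k n (j' : ℕ) := by
        simpa using hmemc
      have hE := Emon_mem j j' le_rfl c ∅ fun l hl => absurd hl (Finset.notMem_empty l)
      rw [Eaut_congr j' _ hmemc' (by simp)] at hE
      exact hf2 _ hE
    -- Step 3: f equals the substituted polynomial
    have hf0 : f = aeval g f := by
      apply MvPolynomial.funext
      intro x
      have h1 := congrArg (eval x) (hshift (-(x j')))
      have h2 : eval x (shiftHom j' (C (-(x j'))) f)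
          = eval (fun l => eval x (if l = j' then X j' + C (-(x j')) else X l)) f :=
        eval_aeval' x _ f
      have h3 : eval x (aeval g f) = eval (fun l => eval x (g l)) f := eval_aeval' x g f
      rw [h3]
      have h4 : (fun l => eval x (if l = j' then X j' + C (-(x j')) else X l))
          = (fun l => eval x (g l)) := by
        funext l
        rw [hgdef]
        by_cases h : l = j'
        · simp only [if_pos h, h]; simp
        · simp only [if_neg h]
      rw [← h1, h2, h4]
    rw [hf0]
    exact hmem
  · intro hf
    refine ⟨Asub_mono (Nat.le_succ j) hf, fun φ hφ => fixes_derived j hφ f hf⟩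

end
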